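/- For every natural number n, ∑_{k=0}^{n} (-1)^k · C(n+k,k) · C(n,k) · H_k = (-1)^n · 2 H_n, as an identity of rational numbers. -/

import Mathlib

/-!
Adding the sums for `n` and `n + 1` merges the coefficients into
`2 (-1)^k C(n+k,k) C(n+1,k)`, whose partial sums have the closed form
`2 (-1)^m C(n+m+1,m) C(n,m)`. Summation by parts against `H_k` then leaves
`-2/(n+1) ∑ (-1)^k C(n+1+k,k) C(n+1,k+1)`, a Chu–Vandermonde convolution equal to
`-2 (-1)^n/(n+1)`. So the sums satisfy the same first-order recurrence as `(-1)^n 2 H_n`.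
-/

open Finset

/-- Harmonic numbers `H_n = ∑_{j=1}^n 1/j`. -/
def H (n : ℕ) : ℚ := ∑ j ∈ Icc 1 n, (1 : ℚ) / j

theorem H_succ (n : ℕ) : H (n + 1) = H n + 1 / (n + 1) := by
  rw [H, H, sum_Icc_succ_top (by omega), Nat.cast_succ]

theorem sum_range_mul_H (u : ℕ → ℚ) (M : ℕ) :
    ∑ k ∈ range (M + 1), u k * H k =
      (∑ k ∈ range (M + 1), u k) * H (M + 1) -
        ∑ k ∈ range (M + 1), (∑ j ∈ range (k + 1), u j) / (k + 1) := by
  induction M with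
  | zero => simp [H]
  | succ M ih =>
    rw [sum_range_succ _ (M + 1), ih, sum_range_succ (fun k => _ / _) (M + 1),
      sum_range_succ u (M + 1), H_succ (M + 1)]
    push_cast
    ring

theorem Nat.choose_mul_choose_succ_comm (n m : ℕ) :
    (n + m + 1).choose m * (n + 1).choose (m + 1) = (n + m + 1).choose (m + 1) * n.choose m := by
  rcases le_or_gt m n with hmn | hnm
  · have h := Nat.choose_mul (n := n + m + 1) hmn
    rwa [Nat.choose_symm_of_eq_add (show n + m + 1 = n + (m + 1) by omega),
      show n + m + 1 - m = n + 1 by omega,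
      Nat.choose_symm_of_eq_add (show n + 1 = (n - m) + (m + 1) by omega), eq_comm] at h
  · simp [Nat.choose_eq_zero_of_lt hnm, Nat.choose_eq_zero_of_lt (show n + 1 < m + 1 by omega)]

theorem Nat.choose_mul_choose_add_choose_mul_choose (n k : ℕ) :
    (n + 1 + k).choose k * (n + 1).choose k + (n + k).choose k * n.choose k =
      2 * ((n + k).choose k * (n + 1).choose k) := by
  rcases k with _ | m
  · simp
  · have h := Nat.choose_mul_choose_succ_comm n m
    rw [show n + 1 + (m + 1) = n + m + 1 + 1 by ring, show n + (m + 1) = n + m + 1 by ring,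
      Nat.choose_succ_succ' (n + m + 1), Nat.choose_succ_succ' n m] at *
    linear_combination h

theorem sum_range_neg_one_pow_choose_mul_choose (n m : ℕ) :
    ∑ k ∈ range (m + 1), (-1 : ℚ) ^ k * (n + k).choose k * (n + 1).choose k =
      (-1) ^ m * (n + m + 1).choose m * n.choose m := by
  induction m with
  | zero => simp
  | succ m ih =>
    have h : ((n + m + 1).choose m : ℚ) * (n + 1).choose (m + 1) =
        (n + m + 1).choose (m + 1) * n.choose m := by
      exact_mod_cast Nat.choose_mul_choose_succ_comm n m
    rw [sum_range_succ, ih, show n + (m + 1) + 1 = n + m + 1 + 1 by ring,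
      show n + (m + 1) = n + m + 1 by ring, Nat.choose_succ_succ' (n + m + 1)]
    rw [Nat.choose_succ_succ' n m] at h ⊢
    push_cast at h ⊢
    linear_combination (-1 : ℚ) ^ m * h

theorem Ring.choose_neg_natCast_add_one {R : Type*} [CommRing R] [BinomialRing R] (m k : ℕ) :
    Ring.choose (-((m + 1 : ℕ) : R)) k = (-1) ^ k * (m + k).choose k := by
  rw [Ring.choose_neg, show ((m + 1 : ℕ) : R) + k - 1 = ((m + k : ℕ) : R) by push_cast; ring,
    Ring.choose_natCast, Units.smul_def, Int.coe_negOnePow_natCast, zsmul_eq_mul]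
  push_cast
  ring

-- Chu–Vandermonde for `C(-(n+2) + (n+1), n) = C(-1, n)`.
theorem sum_neg_one_pow_choose_mul_choose_succ {R : Type*} [CommRing R] [BinomialRing R]
    (n : ℕ) :
    ∑ k ∈ range (n + 1), (-1 : R) ^ k * (n + 1 + k).choose k * (n + 1).choose (k + 1) =
      (-1) ^ n := by
  have h := Ring.add_choose_eq (r := -((n + 1 + 1 : ℕ) : R)) (s := ((n + 1 : ℕ) : R)) n
    (Commute.all _ _)
  rw [Nat.sum_antidiagonal_eq_sum_range_succ
      (fun i j => Ring.choose (-((n + 1 + 1 : ℕ) : R)) i * Ring.choose ((n + 1 : ℕ) : R) j),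
    show -((n + 1 + 1 : ℕ) : R) + ((n + 1 : ℕ) : R) = -((0 + 1 : ℕ) : R) by push_cast; ring,
    Ring.choose_neg_natCast_add_one, zero_add, Nat.choose_self, Nat.cast_one, mul_one] at h
  rw [h]
  refine sum_congr rfl fun k hk => ?_
  rw [Ring.choose_neg_natCast_add_one, Ring.choose_natCast,
    Nat.choose_symm_of_eq_add (show n + 1 = (n - k) + (k + 1) by grind)]

def legendreHarmonicSum (n : ℕ) : ℚ :=
  ∑ k ∈ range (n + 1), (-1 : ℚ) ^ k * (n + k).choose k * n.choose k * H k

theorem legendreHarmonicSum_succ_add (n : ℕ) :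
    legendreHarmonicSum (n + 1) + legendreHarmonicSum n = -2 * (-1) ^ n / (n + 1) := by
  have hext : legendreHarmonicSum n =
      ∑ k ∈ range (n + 2), (-1 : ℚ) ^ k * (n + k).choose k * n.choose k * H k := by
    simp [legendreHarmonicSum, sum_range_succ _ (n + 1)]
  calc legendreHarmonicSum (n + 1) + legendreHarmonicSum n
      = 2 * ∑ k ∈ range (n + 2), (-1 : ℚ) ^ k * (n + k).choose k * (n + 1).choose k * H k := by
        rw [hext, legendreHarmonicSum, ← sum_add_distrib, mul_sum]
        refine sum_congr rfl fun k _ => ?_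
        have h : ((n + 1 + k).choose k : ℚ) * (n + 1).choose k + (n + k).choose k * n.choose k =
            2 * ((n + k).choose k * (n + 1).choose k) := by
          exact_mod_cast Nat.choose_mul_choose_add_choose_mul_choose n k
        linear_combination (-1 : ℚ) ^ k * H k * h
    _ = -2 * ∑ k ∈ range (n + 2), (-1 : ℚ) ^ k * (n + k + 1).choose k * n.choose k / (k + 1) := by
        simp_rw [sum_range_mul_H, sum_range_neg_one_pow_choose_mul_choose]
        simp
    _ = -2 * ∑ k ∈ range (n + 1),
          (-1 : ℚ) ^ k * (n + 1 + k).choose k * (n + 1).choose (k + 1) / (n + 1) := by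
        rw [sum_range_succ, Nat.choose_eq_zero_of_lt (Nat.lt_succ_self n), Nat.cast_zero,
          mul_zero, zero_div, add_zero]
        refine congrArg _ (sum_congr rfl fun k _ => ?_)
        have h : ((n + 1 : ℕ) : ℚ) * n.choose k = (n + 1).choose (k + 1) * (k + 1 : ℕ) := by
          exact_mod_cast Nat.add_one_mul_choose_eq n k
        rw [add_right_comm n 1 k]
        push_cast at h
        field_simp
        linear_combination ((n + k + 1).choose k : ℚ) * h
    _ = -2 * (-1) ^ n / (n + 1) := by
        rw [← sum_div, sum_neg_one_pow_choose_mul_choose_succ, mul_div_assoc]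

theorem stmt_11 (n : ℕ) :
    ∑ k ∈ range (n + 1), (-1 : ℚ) ^ k * (Nat.choose (n + k) k) * (Nat.choose n k) * H k =
      (-1 : ℚ) ^ n * (2 * H n) := by
  change legendreHarmonicSum n = _
  induction n with
  | zero => simp [legendreHarmonicSum, H]
  | succ n ih =>
    rw [eq_sub_of_add_eq (legendreHarmonicSum_succ_add n), ih, H_succ]
    ring
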